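/- Consider an isotropic n-step random walk on S^{p-1} with deterministic initial direction x₀ = μ, where each conditional step pdf f(x_k | x_{k−1}) = g_{k,k−1}(x_{k−1}ᵀx_k) is absolutely continuous and unimodal with mode equal to the previous direction, i.e. each g_{k,k−1} is continuous and strictly increasing on [−1,1]. Then for all n ≥ 1, the pdf of x_n, written f(x_n; μ) = G_n(μᵀx_n), is unimodal with mode the initial direction μ: G_n is strictly increasing on [−1,1]. -/

import Mathlib

open MeasureTheory Set
open scoped RealInnerProductSpace

noncomputable section

/-- The unit sphere `S^{p-1} = {x ∈ ℝ^p : ‖x‖ = 1}` in `ℝ^p`. -/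
abbrev Sph (p : ℕ) : Type := Metric.sphere (0 : EuclideanSpace ℝ (Fin p)) 1

/-- The `(p-1)`-dimensional surface measure on the unit sphere `S^{p-1}`. -/
def sphMeasure (p : ℕ) : Measure (Sph p) :=
  (volume : Measure (EuclideanSpace ℝ (Fin p))).toSphere

/-- The cosine `xᵀy` of the angle between two points of the sphere. -/
def cosAngle {p : ℕ} (x y : Sph p) : ℝ :=
  ⟪(x : EuclideanSpace ℝ (Fin p)), (y : EuclideanSpace ℝ (Fin p))⟫

/-- The spherical convolution `(f ⋆_μ g)(x) = ∫_{S^{p-1}} F(xᵀy) G(yᵀμ) dy` of two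
rotationally symmetric functions `f(x) = F(μᵀx)`, `g(x) = G(μᵀx)` about the axis `μ`. -/
def sphConv {p : ℕ} (F G : ℝ → ℝ) (μ : Sph p) (x : Sph p) : ℝ :=
  ∫ y : Sph p, F (cosAngle x y) * G (cosAngle y μ) ∂(sphMeasure p)

/-- `F : [-1,1] → ℝ` is the profile of a rotationally symmetric probability density
function `x ↦ F(μᵀx)` on `S^{p-1}`: it is nonnegative and the corresponding rotationally
symmetric function is integrable with total integral `1` (about any axis). -/
def IsPdfProfile (p : ℕ) (F : ℝ → ℝ) : Prop :=
  (∀ t ∈ Icc (-1 : ℝ) 1, 0 ≤ F t) ∧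
  ∀ μ : Sph p, Integrable (fun x : Sph p => F (cosAngle μ x)) (sphMeasure p) ∧
    ∫ x : Sph p, F (cosAngle μ x) ∂(sphMeasure p) = 1

/-- The marginal probability density (w.r.t. the surface measure) of the `n`-th position
`x_n` of the isotropic random walk on `S^{p-1}` started at the deterministic direction
`x₀ = μ`, whose `k`-th step has conditional pdf `f(x_k | x_{k-1}) = g k (x_{k-1}ᵀ x_k)`,
the steps being generated independently (Chapman–Kolmogorov recursion). -/
def walkPdf {p : ℕ} (μ : Sph p) (g : ℕ → ℝ → ℝ) : ℕ → Sph p → ℝ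
  | 0 => fun _ => 0
  | 1 => fun x => g 1 (cosAngle μ x)
  | (n + 2) => fun x =>
      ∫ y : Sph p, g (n + 2) (cosAngle y x) * walkPdf μ g (n + 1) y ∂(sphMeasure p)


/-!
Reflections of `ℝ^p` preserve the surface measure. A reflection fixing `μ` and exchanging two
points at the same height `μᵀx` therefore shows that every `x ↦ f(x_n)` depends on `μᵀx` only,
say `f(x_n) = G_n(μᵀx_n)`. For monotonicity, take `μᵀx₁ < μᵀx₂`, put `v = x₂ - x₁` and let `R`
be the reflection exchanging `x₁` and `x₂`. Pairing `y` with `R y`, twice the difference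
`G_{n+1}(μᵀx₂) - G_{n+1}(μᵀx₁)` is the integral of
`(g(yᵀx₂) - g(yᵀx₁)) (G_n(μᵀy) - G_n(μᵀR y))`, and both factors have the sign of `vᵀy`
(here `μᵀ(y - R y)` is a positive multiple of `vᵀy` because `μᵀv > 0`). So the integrand is
nonnegative, and positive off the hyperplane `vᵀy = 0`, which is not null.
-/

open Metric
open scoped Pointwise

namespace LinearIsometryEquiv

variable {E : Type*} [NormedAddCommGroup E] [NormedSpace ℝ E] [MeasurableSpace E] [BorelSpace E]

def sphereMap (e : E ≃ₗᵢ[ℝ] E) : sphere (0 : E) 1 ≃ᵐ sphere (0 : E) 1 :=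
  (e.toHomeomorph.subtype fun x => by simp).toMeasurableEquiv

theorem measurePreserving_sphereMap {μ : Measure E} (e : E ≃ₗᵢ[ℝ] E)
    (he : MeasurePreserving e μ μ) :
    MeasurePreserving e.sphereMap μ.toSphere μ.toSphere := by
  refine ⟨e.sphereMap.measurable, Measure.ext fun s hs => ?_⟩
  rw [e.sphereMap.map_apply, μ.toSphere_apply' hs, μ.toSphere_apply' (e.sphereMap.measurable hs)]
  have : Ioo (0 : ℝ) 1 • ((↑) '' (e.sphereMap ⁻¹' s) : Set E) =
      e.symm '' (Ioo (0 : ℝ) 1 • (↑) '' s) := by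
    rw [← image2_smul, ← image2_smul,
      image_image2_distrib_right (g' := e.symm) fun a b => e.symm.map_smul a b,
      ← e.sphereMap.image_symm, image_image, image_image]
    rfl
  rw [this, e.symm.image_eq_preimage_symm, symm_symm,
    he.measure_preimage_emb e.toHomeomorph.measurableEmbedding]

end LinearIsometryEquiv

theorem MeasureTheory.MeasurePreserving.integral_pos_of_add_comp_pos {α : Type*}
    [MeasurableSpace α] {μ : Measure α} {T : α ≃ᵐ α} (hT : MeasurePreserving T μ μ)
    {f : α → ℝ} (hf : Integrable f μ) (h0 : ∀ x, 0 ≤ f x + f (T x)) {s : Set α}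
    (hs : 0 < μ s) (hpos : ∀ x ∈ s, 0 < f x + f (T x)) :
    0 < ∫ x, f x ∂μ := by
  have hfT : Integrable (fun x => f (T x)) μ := (hT.integrable_comp_emb T.measurableEmbedding).2 hf
  have hsum : 0 < ∫ x, (f x + f (T x)) ∂μ :=
    (integral_pos_iff_support_of_nonneg h0 (hf.add hfT)).2
      (hs.trans_le (measure_mono fun x hx => (hpos x hx).ne'))
  rw [integral_add hf hfT, hT.integral_comp' f] at hsum
  linarith

theorem inner_reflection_orthogonal_singleton {F : Type*} [NormedAddCommGroup F]
    [InnerProductSpace ℝ F] (v u w : F) :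
    ⟪u, (ℝ ∙ v)ᗮ.reflection w⟫ = ⟪u, w⟫ - 2 * (⟪v, w⟫ / ‖v‖ ^ 2) * ⟪u, v⟫ := by
  rw [Submodule.reflection_orthogonal_apply, Submodule.reflection_singleton_apply]
  simp only [RCLike.ofReal_real_eq_id, id_eq, two_nsmul, inner_neg_right, inner_sub_right,
    inner_add_right, real_inner_smul_right]
  ring

section MonotoneOnIcc

variable {f : ℝ → ℝ} {a b : ℝ}

theorem MonotoneOn.measurable_comp {α : Type*} [MeasurableSpace α] (hab : a ≤ b)
    (hf : MonotoneOn f (Icc a b)) {u : α → ℝ} (hu : Measurable u) (hu_mem : ∀ x, u x ∈ Icc a b) :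
    Measurable fun x => f (u x) := by
  have hext : (fun x => f (u x)) = IccExtend hab (fun t : Icc a b => f t) ∘ u :=
    funext fun x => (IccExtend_of_mem hab (fun t : Icc a b => f t) (hu_mem x)).symm
  rw [hext]
  exact ((monotoneOn_iff_monotone.1 hf).IccExtend hab).measurable.comp hu

theorem MonotoneOn.abs_le_max (hf : MonotoneOn f (Icc a b)) {t : ℝ} (ht : t ∈ Icc a b) :
    |f t| ≤ max |f a| |f b| := by
  have hlo : f a ≤ f t := hf ⟨le_rfl, ht.1.trans ht.2⟩ ht ht.1
  have hhi : f t ≤ f b := hf ht ⟨ht.1.trans ht.2, le_rfl⟩ ht.2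
  refine abs_le.2 ⟨?_, ?_⟩
  · linarith [neg_abs_le (f a), le_max_left |f a| |f b|]
  · linarith [le_abs_self (f b), le_max_right |f a| |f b|]

end MonotoneOnIcc

section SignOfDifferences

variable {s t : Set ℝ} {f g : ℝ → ℝ} {a b c d : ℝ}

theorem StrictMonoOn.sub_mul_sub_pos (hf : StrictMonoOn f s) (hg : StrictMonoOn g t)
    (ha : a ∈ s) (hb : b ∈ s) (hc : c ∈ t) (hd : d ∈ t) (h : 0 < (a - b) * (c - d)) :
    0 < (f a - f b) * (g c - g d) := by
  rcases mul_pos_iff.1 h with ⟨hab, hcd⟩ | ⟨hab, hcd⟩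
  · exact mul_pos (sub_pos.2 (hf hb ha (sub_pos.1 hab))) (sub_pos.2 (hg hd hc (sub_pos.1 hcd)))
  · exact mul_pos_of_neg_of_neg (sub_neg.2 (hf ha hb (sub_neg.1 hab)))
      (sub_neg.2 (hg hc hd (sub_neg.1 hcd)))

theorem StrictMonoOn.sub_mul_sub_nonneg (hf : StrictMonoOn f s) (hg : StrictMonoOn g t)
    (ha : a ∈ s) (hb : b ∈ s) (hc : c ∈ t) (hd : d ∈ t) (h : 0 ≤ (a - b) * (c - d)) :
    0 ≤ (f a - f b) * (g c - g d) := by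
  rcases h.lt_or_eq with h | h
  · exact (hf.sub_mul_sub_pos hg ha hb hc hd h).le
  · rcases mul_eq_zero.1 h.symm with h | h <;> simp [sub_eq_zero.1 h]

end SignOfDifferences

namespace Sph

variable {p : ℕ}

local notation "E" => EuclideanSpace ℝ (Fin p)

instance : IsFiniteMeasure (sphMeasure p) := by unfold sphMeasure; infer_instance

instance : (sphMeasure p).IsOpenPosMeasure := by unfold sphMeasure; infer_instance

theorem measurePreserving_sphereMap (e : E ≃ₗᵢ[ℝ] E) :
    MeasurePreserving e.sphereMap (sphMeasure p) (sphMeasure p) :=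
  e.measurePreserving_sphereMap e.measurePreserving

theorem cosAngle_mem_Icc (x y : Sph p) : cosAngle x y ∈ Icc (-1 : ℝ) 1 := by
  have h := abs_real_inner_le_norm (x : E) (y : E)
  rw [norm_eq_of_mem_sphere x, norm_eq_of_mem_sphere y, one_mul] at h
  exact abs_le.mp h

theorem continuous_cosAngle : Continuous fun q : Sph p × Sph p => cosAngle q.1 q.2 :=
  (continuous_subtype_val.comp continuous_fst).inner (continuous_subtype_val.comp continuous_snd)

theorem cosAngle_sphereMap (e : E ≃ₗᵢ[ℝ] E) (x y : Sph p) :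
    cosAngle (e.sphereMap x) (e.sphereMap y) = cosAngle x y :=
  e.inner_map_map _ _

theorem exists_cosAngle_eq (hp : 2 ≤ p) (μ : Sph p) {t : ℝ} (ht : t ∈ Icc (-1 : ℝ) 1) :
    ∃ x : Sph p, cosAngle μ x = t := by
  have hrank : 1 < Module.rank ℝ E := by
    rw [← Module.finrank_eq_rank, finrank_euclideanSpace_fin]
    exact_mod_cast hp
  have hμ : ‖(μ : E)‖ = 1 := norm_eq_of_mem_sphere μ
  have hμμ : ⟪(μ : E), μ⟫ = 1 := by rw [real_inner_self_eq_norm_sq, hμ, one_pow]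
  obtain ⟨x, hx, hxt⟩ :=
    (isConnected_sphere hrank (0 : E) zero_le_one).isPreconnected.intermediate_value
      (f := fun x : E => ⟪(μ : E), x⟫) (a := -(μ : E)) (b := μ) (by simp [hμ]) (by simp [hμ])
      (continuous_const.inner continuous_id).continuousOn
      (by simpa only [inner_neg_right, hμμ] using ht)
  exact ⟨⟨x, hx⟩, hxt⟩

theorem strictMonoOn_of_comp_cosAngle (hp : 2 ≤ p) (μ : Sph p) {f : Sph p → ℝ} {G : ℝ → ℝ}
    (hfG : ∀ x, f x = G (cosAngle μ x))
    (hf : ∀ x y, cosAngle μ x < cosAngle μ y → f x < f y) :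
    StrictMonoOn G (Icc (-1 : ℝ) 1) := by
  intro s hs t ht hst
  obtain ⟨x, rfl⟩ := exists_cosAngle_eq hp μ hs
  obtain ⟨y, rfl⟩ := exists_cosAngle_eq hp μ ht
  rw [← hfG, ← hfG]
  exact hf x y hst

abbrev swap (x y : Sph p) : E ≃ₗᵢ[ℝ] E := (ℝ ∙ ((y : E) - x))ᗮ.reflection

theorem swap_apply_right (x y : Sph p) : swap x y y = x :=
  Submodule.reflection_sub (by rw [norm_eq_of_mem_sphere x, norm_eq_of_mem_sphere y])

theorem swap_apply_left (x y : Sph p) : swap x y x = y := by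
  rw [← swap_apply_right x y, Submodule.reflection_reflection]

theorem swap_sphereMap_left (x y : Sph p) : (swap x y).sphereMap x = y :=
  Subtype.ext (swap_apply_left x y)

theorem swap_sphereMap_right (x y : Sph p) : (swap x y).sphereMap y = x :=
  Subtype.ext (swap_apply_right x y)

theorem sphMeasure_setOf_inner_ne_zero_pos {v : E} (hv : v ≠ 0) :
    0 < sphMeasure p {y : Sph p | ⟪v, (y : E)⟫ ≠ 0} := by
  refine (isOpen_compl_singleton.preimage
    (continuous_const.inner continuous_subtype_val)).measure_pos _ ?_
  have hv' : 0 < ‖v‖ := norm_pos_iff.2 hv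
  refine ⟨⟨‖v‖⁻¹ • v, by simp [norm_smul, hv'.ne']⟩, ?_⟩
  simp [real_inner_smul_right, hv]

theorem integrable_comp_cosAngle_mul (μ x : Sph p) {F G : ℝ → ℝ}
    (hF : MonotoneOn F (Icc (-1) 1)) (hG : MonotoneOn G (Icc (-1) 1)) :
    Integrable (fun y => F (cosAngle y x) * G (cosAngle μ y)) (sphMeasure p) := by
  have hmF := hF.measurable_comp (by norm_num)
    (continuous_cosAngle.comp (continuous_id.prodMk continuous_const)).measurable
    fun y => cosAngle_mem_Icc y x
  have hmG := hG.measurable_comp (by norm_num)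
    (continuous_cosAngle.comp (continuous_const.prodMk continuous_id)).measurable
    fun y => cosAngle_mem_Icc μ y
  refine .of_bound (hmF.mul hmG).aestronglyMeasurable (max |F (-1)| |F 1| * max |G (-1)| |G 1|)
    (ae_of_all _ fun y => ?_)
  rw [Real.norm_eq_abs, abs_mul]
  exact mul_le_mul (hF.abs_le_max (cosAngle_mem_Icc y x)) (hG.abs_le_max (cosAngle_mem_Icc μ y))
    (abs_nonneg _) ((abs_nonneg _).trans (le_max_left _ _))

theorem cosAngle_sub_mul_cosAngle_sub_swap (μ x₁ x₂ y : Sph p) :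
    (cosAngle y x₂ - cosAngle y x₁) * (cosAngle μ y - cosAngle μ ((swap x₁ x₂).sphereMap y)) =
      2 * (⟪(μ : E), x₂ - x₁⟫ / ‖(x₂ : E) - x₁‖ ^ 2) * ⟪(x₂ : E) - x₁, y⟫ ^ 2 := by
  have h₁ : cosAngle y x₂ - cosAngle y x₁ = ⟪(x₂ : E) - x₁, y⟫ := by
    rw [real_inner_comm, inner_sub_right]
    rfl
  have h₂ : cosAngle μ ((swap x₁ x₂).sphereMap y) =
      cosAngle μ y - 2 * (⟪(x₂ : E) - x₁, y⟫ / ‖(x₂ : E) - x₁‖ ^ 2) * ⟪(μ : E), x₂ - x₁⟫ :=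
    inner_reflection_orthogonal_singleton _ _ _
  rw [h₁, h₂]
  ring

theorem integral_lt_integral_of_cosAngle_lt (μ : Sph p) {F G : ℝ → ℝ}
    (hF : StrictMonoOn F (Icc (-1) 1)) (hG : StrictMonoOn G (Icc (-1) 1)) {x₁ x₂ : Sph p}
    (h : cosAngle μ x₁ < cosAngle μ x₂) :
    ∫ y, F (cosAngle y x₁) * G (cosAngle μ y) ∂(sphMeasure p) <
      ∫ y, F (cosAngle y x₂) * G (cosAngle μ y) ∂(sphMeasure p) := by
  set R := (swap x₁ x₂).sphereMap
  set v : E := (x₂ : E) - x₁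
  set ψ : Sph p → ℝ := fun y => (F (cosAngle y x₂) - F (cosAngle y x₁)) * G (cosAngle μ y)
  have hint (x : Sph p) := integrable_comp_cosAngle_mul μ x hF.monotoneOn hG.monotoneOn
  have hψ : Integrable ψ (sphMeasure p) :=
    ((hint x₂).sub (hint x₁)).congr (ae_of_all _ fun y => (sub_mul _ _ _).symm)
  have hpair (y : Sph p) : ψ y + ψ (R y) =
      (F (cosAngle y x₂) - F (cosAngle y x₁)) * (G (cosAngle μ y) - G (cosAngle μ (R y))) := by
    have h₁ : cosAngle (R y) x₂ = cosAngle y x₁ := by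
      rw [← swap_sphereMap_left x₁ x₂, cosAngle_sphereMap]
    have h₂ : cosAngle (R y) x₁ = cosAngle y x₂ := by
      rw [← swap_sphereMap_right x₁ x₂, cosAngle_sphereMap]
    simp only [ψ, h₁, h₂]
    ring
  have hμv : 0 < ⟪(μ : E), v⟫ := by
    rw [inner_sub_right]
    exact sub_pos.2 h
  have hv : v ≠ 0 := by
    rintro hv
    rw [hv, inner_zero_right] at hμv
    exact hμv.false
  have hc : 0 < 2 * (⟪(μ : E), v⟫ / ‖v‖ ^ 2) := by
    have := norm_pos_iff.2 hv
    positivity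
  have hsign := cosAngle_sub_mul_cosAngle_sub_swap μ x₁ x₂
  have hmem := cosAngle_mem_Icc (p := p)
  have hψ_pos : 0 < ∫ y, ψ y ∂(sphMeasure p) := by
    refine (measurePreserving_sphereMap (swap x₁ x₂)).integral_pos_of_add_comp_pos hψ
      (fun y => ?_) (sphMeasure_setOf_inner_ne_zero_pos hv) (fun y hy => ?_) <;> rw [hpair]
    · exact hF.sub_mul_sub_nonneg hG (hmem _ _) (hmem _ _) (hmem _ _) (hmem _ _)
        (hsign y ▸ by positivity)
    · exact hF.sub_mul_sub_pos hG (hmem _ _) (hmem _ _) (hmem _ _) (hmem _ _)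
        (hsign y ▸ mul_pos hc (pow_two_pos_of_ne_zero hy))
  rw [← sub_pos, ← integral_sub (hint x₂) (hint x₁)]
  simpa only [ψ, sub_mul] using hψ_pos

theorem walkPdf_sphereMap (μ : Sph p) (g : ℕ → ℝ → ℝ) {e : E ≃ₗᵢ[ℝ] E} (he : e μ = μ) :
    ∀ n x, walkPdf μ g n (e.sphereMap x) = walkPdf μ g n x
  | 0, _ => rfl
  | 1, x => by
    simp only [walkPdf]
    rw [← cosAngle_sphereMap e μ x, show e.sphereMap μ = μ from Subtype.ext he]
  | n + 2, x => by
    simp only [walkPdf]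
    rw [← (measurePreserving_sphereMap e).integral_comp']
    simp only [cosAngle_sphereMap, walkPdf_sphereMap μ g he (n + 1)]

theorem walkPdf_factorsThrough (μ : Sph p) (g : ℕ → ℝ → ℝ) (n : ℕ) :
    (walkPdf μ g n).FactorsThrough (cosAngle μ) := by
  intro x y hxy
  have hμ : swap x y μ = μ := by
    refine Submodule.reflection_mem_subspace_eq_self
      (Submodule.mem_orthogonal_singleton_iff_inner_right.2 ?_)
    rw [inner_sub_left, real_inner_comm, real_inner_comm (μ : E)]
    exact sub_eq_zero.2 hxy.symm
  rw [← walkPdf_sphereMap μ g hμ n x, swap_sphereMap_left]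

/-- The paper's `G_n`; its values off `[-1, 1]` are junk. -/
def walkProfile (μ : Sph p) (g : ℕ → ℝ → ℝ) (n : ℕ) : ℝ → ℝ :=
  Function.extend (cosAngle μ) (walkPdf μ g n) 0

theorem walkPdf_eq_walkProfile (μ : Sph p) (g : ℕ → ℝ → ℝ) (n : ℕ) (x : Sph p) :
    walkPdf μ g n x = walkProfile μ g n (cosAngle μ x) :=
  ((walkPdf_factorsThrough μ g n).extend_apply 0 x).symm

theorem strictMonoOn_walkProfile (hp : 2 ≤ p) (μ : Sph p) {g : ℕ → ℝ → ℝ}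
    (hgm : ∀ k : ℕ, 1 ≤ k → StrictMonoOn (g k) (Icc (-1 : ℝ) 1)) (n : ℕ) :
    StrictMonoOn (walkProfile μ g (n + 1)) (Icc (-1 : ℝ) 1) := by
  induction n with
  | zero =>
    exact strictMonoOn_of_comp_cosAngle hp μ (walkPdf_eq_walkProfile μ g 1) fun x y hxy =>
      hgm 1 le_rfl (cosAngle_mem_Icc μ x) (cosAngle_mem_Icc μ y) hxy
  | succ n ih =>
    refine strictMonoOn_of_comp_cosAngle hp μ (walkPdf_eq_walkProfile μ g _) fun x y hxy => ?_
    simp only [walkPdf, walkPdf_eq_walkProfile μ g (n + 1)]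
    exact integral_lt_integral_of_cosAngle_lt μ (hgm (n + 2) (by omega)) ih hxy

end Sph

theorem stmt_8_general {p : ℕ} (hp : 2 ≤ p) (μ : Sph p) (g : ℕ → ℝ → ℝ)
    (hgm : ∀ k : ℕ, 1 ≤ k → StrictMonoOn (g k) (Icc (-1 : ℝ) 1))
    (n : ℕ) (hn : 1 ≤ n) :
    ∃ G : ℝ → ℝ, (∀ x : Sph p, walkPdf μ g n x = G (cosAngle μ x)) ∧
      StrictMonoOn G (Icc (-1 : ℝ) 1) := by
  obtain ⟨m, rfl⟩ := Nat.exists_eq_add_of_le' hn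
  exact ⟨Sph.walkProfile μ g (m + 1), Sph.walkPdf_eq_walkProfile μ g _,
    Sph.strictMonoOn_walkProfile hp μ hgm m⟩

/-- unimodality of the isotropic random walk. If every step profile `g k` is
continuous, strictly increasing and nonnegative on `[-1,1]` (absolutely continuous
unimodal steps with mode the previous direction), then for every `n ≥ 1` the pdf of
`x_n`, written `G_n(μᵀ x_n)`, is unimodal with mode the initial direction `μ`: `G_n` is
strictly increasing on `[-1,1]`. -/
theorem stmt_8 {p : ℕ} (hp : 2 ≤ p) (μ : Sph p) (g : ℕ → ℝ → ℝ)
    (hg : ∀ k : ℕ, 1 ≤ k → IsPdfProfile p (g k))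
    (hgc : ∀ k : ℕ, 1 ≤ k → ContinuousOn (g k) (Icc (-1 : ℝ) 1))
    (hgm : ∀ k : ℕ, 1 ≤ k → StrictMonoOn (g k) (Icc (-1 : ℝ) 1))
    (n : ℕ) (hn : 1 ≤ n) :
    ∃ G : ℝ → ℝ, (∀ x : Sph p, walkPdf μ g n x = G (cosAngle μ x)) ∧
      StrictMonoOn G (Icc (-1 : ℝ) 1) :=
  stmt_8_general hp μ g hgm n hn
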